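/- Under the stationary continuous-time Markov chain setting, let (h_n) be a sequence of positive reals with h_n → 0 and n h_n → ∞, and set t_j = j h_n. Then for every i ∈ S, the random variables (1/n) ∑_{j=1}^{n} 1_{{Z_{t_{j−1}} = i}} − (1/(n h_n)) ∫_0^{n h_n} 1_{{Z_s = i}} ds converge to 0 in probability as n → ∞. -/

import Mathlib

open MeasureTheory Finset Filter

/-- The σ-algebra generated by `(Z_u : 0 ≤ u ≤ s)`. -/
def filtZ {Ω : Type*} {N : ℕ} (Z : ℝ → Ω → Fin N) (s : ℝ) : MeasurableSpace Ω :=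
  ⨆ u ∈ Set.Icc (0 : ℝ) s, MeasurableSpace.comap (Z u) ⊤

/-! By the Markov property, `E|𝟙{Z_t = i} - 𝟙{Z_s = i}| ≤ ∑ₖ |exp((t - s) Q)ₖᵢ - δₖᵢ|`, which
tends to `0` with `t - s` by continuity of the matrix exponential. On each block `[k h, (k + 1) h]`
the Riemann sum differs from the time average by the mean over `s` of
`𝟙{Z_{kh} = i} - 𝟙{Z_s = i}`, so by Fubini the `L¹` norm of the difference is at most the
supremum of that bound over `t - s ≤ h_n`, which tends to `0`; convergence in `L¹` gives
convergence in probability. -/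

open Topology Function

theorem Matrix.continuous_exp_smul {n : Type*} [Fintype n] [DecidableEq n] (Q : Matrix n n ℝ) :
    Continuous fun u : ℝ => NormedSpace.exp (u • Q) := by
  open scoped Matrix.Norms.Operator in
  exact NormedSpace.exp_continuous.comp (continuous_id.smul continuous_const)

theorem tendstoInMeasure_of_tendsto_integral_norm {Ω ι E : Type*} [MeasurableSpace Ω]
    {μ : Measure Ω} [NormedAddCommGroup E] {l : Filter ι} {f : ι → Ω → E}
    (hf : ∀ i, Integrable (f i) μ)
    (hlim : Tendsto (fun i => ∫ ω, ‖f i ω‖ ∂μ) l (𝓝 0)) :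
    TendstoInMeasure μ f l 0 := by
  refine tendstoInMeasure_of_tendsto_eLpNorm one_ne_zero (fun i => (hf i).aestronglyMeasurable)
    aestronglyMeasurable_zero ?_
  simp only [sub_zero, eLpNorm_one_eq_lintegral_enorm,
    ← ofReal_integral_norm_eq_lintegral_enorm (hf _)]
  simpa using ENNReal.tendsto_ofReal hlim

section Conditioning

variable {Ω α : Type*} {m m₀ : MeasurableSpace Ω} {μ : Measure Ω}
  [MeasurableSpace α] [MeasurableSingletonClass α]

theorem setIntegral_preimage_eq_of_condExp_ae_eq_comp [IsFiniteMeasure μ] (hm : m ≤ m₀)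
    {X : Ω → α} (hX : Measurable[m] X) {f : Ω → ℝ} (hf : Integrable f μ) {g : α → ℝ}
    (hfg : μ[f | m] =ᵐ[μ] g ∘ X) (k : α) :
    ∫ ω in X ⁻¹' {k}, f ω ∂μ = μ.real (X ⁻¹' {k}) * g k := by
  have hk : MeasurableSet[m] (X ⁻¹' {k}) := hX (measurableSet_singleton k)
  rw [← setIntegral_condExp hm hf hk, setIntegral_congr_ae (hm _ hk) (hfg.mono fun _ h _ => h),
    setIntegral_congr_fun (hm _ hk) (g := fun _ => g k) fun ω (hω : X ω = k) => by simp [hω],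
    setIntegral_const, smul_eq_mul]

theorem integral_abs_ite_sub_ite_le_of_condExp [Fintype α] [DecidableEq α]
    [IsProbabilityMeasure μ] (hm : m ≤ m₀) {X Y : Ω → α} (hX : Measurable[m] X)
    (hY : Measurable Y) {P : Matrix α α ℝ} {i : α}
    (hP : μ[fun ω => if Y ω = i then (1 : ℝ) else 0 | m] =ᵐ[μ] fun ω => P (X ω) i) :
    ∫ ω, |(if Y ω = i then (1 : ℝ) else 0) - (if X ω = i then 1 else 0)| ∂μ
      ≤ ∑ k, |P k i - (1 : Matrix α α ℝ) k i| := by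
  set F : Ω → ℝ := fun ω => if Y ω = i then 1 else 0
  have hXk : ∀ k, MeasurableSet (X ⁻¹' {k}) := fun k => hm _ (hX (measurableSet_singleton k))
  have hXi : Measurable fun ω => if X ω = i then (1 : ℝ) else 0 :=
    measurable_const.ite (hXk i) measurable_const
  have hFm : Measurable F := measurable_const.ite (hY (measurableSet_singleton i)) measurable_const
  have hF : Integrable F μ :=
    .of_bound hFm.aestronglyMeasurable 1 (ae_of_all _ fun ω => by unfold F; split_ifs <;> simp)
  have hmass := setIntegral_preimage_eq_of_condExp_ae_eq_comp hm hX hF (g := fun k => P k i) hP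
  have hblock : ∀ k, ∫ ω in X ⁻¹' {k}, |F ω - if X ω = i then 1 else 0| ∂μ
      = μ.real (X ⁻¹' {k}) * (if k = i then 1 - P k i else P k i) := by
    intro k
    by_cases hk : k = i
    · subst hk
      rw [setIntegral_congr_fun (hXk k) (g := fun ω => 1 - F ω) fun ω (hω : X ω = k) => by
          unfold F; split_ifs <;> simp_all,
        integral_sub (integrable_const 1) hF.integrableOn, setIntegral_const, hmass]
      simp [mul_sub]
    · rw [setIntegral_congr_fun (hXk k) (g := F) fun ω (hω : X ω = k) => by
          unfold F; split_ifs <;> simp_all, hmass]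
      simp [hk]
  have hcover : ⋃ k, X ⁻¹' {k} = Set.univ := by ext; simp
  have hint : Integrable (fun ω => |F ω - if X ω = i then 1 else 0|) μ :=
    .of_bound (hFm.sub hXi).abs.aestronglyMeasurable 1 (ae_of_all _ fun ω => by
      unfold F; split_ifs <;> simp)
  rw [← setIntegral_univ, ← hcover, integral_iUnion_fintype hXk
    (fun k l hkl => (Set.disjoint_singleton.2 hkl).preimage X) fun k => hint.integrableOn]
  refine sum_le_sum fun k _ => ?_
  have hle : (if k = i then 1 - P k i else P k i) ≤ |P k i - (1 : Matrix α α ℝ) k i| := by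
    split_ifs with hk
    · subst hk
      rw [Matrix.one_apply_eq, abs_sub_comm]
      exact le_abs_self _
    · simp [Matrix.one_apply_ne hk, le_abs_self]
  rw [hblock]
  nlinarith [abs_nonneg (P k i - (1 : Matrix α α ℝ) k i), measureReal_nonneg (s := X ⁻¹' {k})
    (μ := μ), measureReal_le_one (s := X ⁻¹' {k}) (μ := μ)]

end Conditioning

theorem abs_riemannAvg_sub_timeAvg_le {g : ℝ → ℝ}
    (hg : ∀ a b, IntervalIntegrable g volume a b) {H : ℝ} (hH : 0 < H) {n : ℕ} (hn : n ≠ 0) :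
    |(1 / (n : ℝ)) * ∑ k ∈ range n, g (k * H) - (1 / (n * H)) * ∫ s in (0 : ℝ)..n * H, g s|
      ≤ (1 / (n * H)) *
          ∑ k ∈ range n, ∫ s in Set.Ioc (k * H) ((k + 1) * H), |g s - g (k * H)| := by
  have hle : ∀ k : ℕ, (k : ℝ) * H ≤ (k + 1) * H := fun k => by nlinarith
  have hsplit : ∫ s in (0 : ℝ)..n * H, g s
      = ∑ k ∈ range n, ∫ s in (k : ℝ) * H..(k + 1) * H, g s := by
    have := intervalIntegral.sum_integral_adjacent_intervals (a := fun k : ℕ => (k : ℝ) * H)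
      (fun k _ => hg _ _) (n := n)
    push_cast at this
    rw [zero_mul] at this
    exact this.symm
  have hblock : ∀ k : ℕ, H * g (k * H) - ∫ s in (k : ℝ) * H..(k + 1) * H, g s
      = ∫ s in (k : ℝ) * H..(k + 1) * H, (g (k * H) - g s) := fun k => by
    rw [intervalIntegral.integral_sub intervalIntegrable_const (hg _ _),
      intervalIntegral.integral_const, smul_eq_mul]
    ring
  have hscale : 1 / (n : ℝ) = 1 / (n * H) * H := by field_simp
  rw [hscale, mul_assoc, ← mul_sub, mul_sum, hsplit, ← sum_sub_distrib]
  simp only [hblock]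
  rw [abs_mul, abs_of_pos (by positivity)]
  gcongr
  refine (abs_sum_le_sum_abs _ _).trans (sum_le_sum fun k _ => ?_)
  rw [← intervalIntegral.integral_of_le (hle k)]
  refine (intervalIntegral.abs_integral_le_integral_abs (hle k)).trans_eq ?_
  simp_rw [abs_sub_comm]

section TimeAverages

variable {Ω : Type*} [MeasurableSpace Ω] {μ : Measure Ω} [IsFiniteMeasure μ]

theorem integrable_setIntegral_Ioc {F : ℝ → Ω → ℝ} (hF : Measurable (uncurry F)) {C : ℝ}
    (hC : ∀ s ω, |F s ω| ≤ C) (a b : ℝ) :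
    Integrable (fun ω => ∫ s in Set.Ioc a b, F s ω) μ :=
  (Integrable.of_bound hF.aestronglyMeasurable C (ae_of_all _ fun p => hC p.1 p.2) :
    Integrable (uncurry F) ((volume.restrict (Set.Ioc a b)).prod μ)).integral_prod_right

theorem integral_setIntegral_Ioc_le {F : ℝ → Ω → ℝ} (hF : Measurable (uncurry F)) {C : ℝ}
    (hC : ∀ s ω, |F s ω| ≤ C) {a b ε : ℝ} (hab : a ≤ b)
    (hε : ∀ s ∈ Set.Ioc a b, ∫ ω, F s ω ∂μ ≤ ε) :
    ∫ ω, (∫ s in Set.Ioc a b, F s ω) ∂μ ≤ (b - a) * ε := by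
  have hint : Integrable (uncurry F) ((volume.restrict (Set.Ioc a b)).prod μ) :=
    .of_bound hF.aestronglyMeasurable C (ae_of_all _ fun p => hC p.1 p.2)
  rw [← integral_integral_swap hint]
  calc ∫ s in Set.Ioc a b, ∫ ω, F s ω ∂μ ≤ ∫ s in Set.Ioc a b, ε :=
        setIntegral_mono_on hint.integral_prod_left (integrableOn_const measure_Ioc_lt_top.ne)
          measurableSet_Ioc hε
    _ = (b - a) * ε := by rw [setIntegral_const, Real.volume_real_Ioc_of_le hab, smul_eq_mul]

variable {f : ℝ → Ω → ℝ} {C : ℝ}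

theorem integrable_riemannAvg_sub_timeAvg (hf : Measurable (uncurry f))
    (hC : ∀ t ω, |f t ω| ≤ C) {H : ℝ} (hH : 0 ≤ H) (n : ℕ) :
    Integrable (fun ω => (1 / (n : ℝ)) * ∑ k ∈ range n, f (k * H) ω
        - (1 / (n * H)) * ∫ s in (0 : ℝ)..n * H, f s ω) μ := by
  have hfix : ∀ t, Integrable (f t) μ := fun t =>
    .of_bound (hf.comp (measurable_const.prodMk measurable_id)).aestronglyMeasurable C
      (ae_of_all _ (hC t))
  have hint : Integrable (fun ω => ∫ s in (0 : ℝ)..n * H, f s ω) μ := by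
    simp only [intervalIntegral.integral_of_le (by positivity : (0 : ℝ) ≤ n * H)]
    exact integrable_setIntegral_Ioc hf hC _ _
  exact ((integrable_finsetSum _ fun k _ => hfix _).const_mul _).sub (hint.const_mul _)

theorem integral_abs_riemannAvg_sub_timeAvg_le (hf : Measurable (uncurry f))
    (hC : ∀ t ω, |f t ω| ≤ C) {H ε : ℝ} (hH : 0 < H)
    (hε : ∀ s t, 0 ≤ s → s ≤ t → t ≤ s + H → ∫ ω, |f t ω - f s ω| ∂μ ≤ ε)
    {n : ℕ} (hn : n ≠ 0) :
    ∫ ω, |(1 / (n : ℝ)) * ∑ k ∈ range n, f (k * H) ω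
        - (1 / (n * H)) * ∫ s in (0 : ℝ)..n * H, f s ω| ∂μ ≤ ε := by
  set G : ℕ → ℝ → Ω → ℝ := fun k s ω => |f s ω - f (k * H) ω|
  have hG : ∀ k, Measurable (uncurry (G k)) := fun k =>
    (hf.sub (hf.comp (measurable_const.prodMk measurable_snd))).abs
  have hGC : ∀ k s ω, |G k s ω| ≤ 2 * C := fun k s ω => by
    rw [abs_abs]
    exact (abs_sub _ _).trans (by linarith [hC s ω, hC (k * H) ω])
  have hGint : ∀ k : ℕ,
      Integrable (fun ω => ∫ s in Set.Ioc (k * H) ((k + 1) * H), G k s ω) μ := fun k =>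
    integrable_setIntegral_Ioc (hG k) (hGC k) _ _
  have hpath : ∀ ω a b, IntervalIntegrable (f · ω) volume a b := fun ω a b =>
    (intervalIntegrable_const : IntervalIntegrable (fun _ => C) volume a b).mono_fun
      (hf.comp (measurable_id.prodMk measurable_const)).aestronglyMeasurable
      (ae_of_all _ fun s => by
        simpa only [Real.norm_eq_abs] using (hC s ω).trans (le_abs_self C))
  calc _ ≤ ∫ ω, (1 / (n * H)) *
          (∑ k ∈ range n, ∫ s in Set.Ioc (k * H) ((k + 1) * H), G k s ω) ∂μ :=
        integral_mono_of_nonneg (ae_of_all _ fun _ => abs_nonneg _)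
          ((integrable_finsetSum _ fun k _ => hGint k).const_mul _)
          (ae_of_all _ fun ω => abs_riemannAvg_sub_timeAvg_le (hpath ω) hH hn)
    _ = (1 / (n * H)) *
          ∑ k ∈ range n, ∫ ω, (∫ s in Set.Ioc (k * H) ((k + 1) * H), G k s ω) ∂μ := by
        rw [integral_const_mul, integral_finsetSum _ fun k _ => hGint k]
    _ ≤ (1 / (n * H)) * ∑ k ∈ range n, (((k + 1) * H - k * H) * ε) := by
        gcongr with k
        exact integral_setIntegral_Ioc_le (hG k) (hGC k) (by nlinarith) fun s hs =>
          hε _ _ (by positivity) hs.1.le (by linarith [hs.2])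
    _ = ε := by
        simp only [add_one_mul, add_sub_cancel_left, sum_const, card_range, nsmul_eq_mul]
        field_simp

theorem tendsto_integral_abs_riemannAvg_sub_timeAvg (hf : Measurable (uncurry f))
    (hC : ∀ t ω, |f t ω| ≤ C) {M : ℝ → ℝ} (hM : Tendsto M (𝓝 0) (𝓝 0))
    (hstep : ∀ s t, 0 ≤ s → s ≤ t → ∫ ω, |f t ω - f s ω| ∂μ ≤ M (t - s))
    {h : ℕ → ℝ} (hpos : ∀ n, 0 < h n) (h0 : Tendsto h atTop (𝓝 0)) :
    Tendsto (fun n : ℕ => ∫ ω, |(1 / (n : ℝ)) * ∑ k ∈ range n, f (k * h n) ω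
        - (1 / (n * h n)) * ∫ s in (0 : ℝ)..n * h n, f s ω| ∂μ) atTop (𝓝 0) := by
  refine tendsto_order.2 ⟨fun a ha => .of_forall fun n => ha.trans_le
    (integral_nonneg fun _ => abs_nonneg _), fun a ha => ?_⟩
  obtain ⟨δ, hδ, hMδ⟩ :=
    Metric.eventually_nhds_iff.1 (hM.eventually (gt_mem_nhds (half_pos ha)))
  filter_upwards [h0.eventually (gt_mem_nhds hδ), eventually_ne_atTop 0] with n hhn hn
  refine (integral_abs_riemannAvg_sub_timeAvg_le hf hC (hpos n) (fun s t hs hst htH =>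
    (hstep s t hs hst).trans (hMδ ?_).le) hn).trans_lt (half_lt_self ha)
  rw [Real.dist_eq, sub_zero, abs_of_nonneg (sub_nonneg.2 hst)]
  linarith

end TimeAverages

theorem Finset.sum_Icc_one_cast_sub_one {M : Type*} [AddCommMonoid M] (g : ℝ → M) (n : ℕ) :
    ∑ j ∈ Icc 1 n, g ((j : ℝ) - 1) = ∑ k ∈ range n, g k := by
  rw [← Ico_add_one_right_eq_Icc, sum_Ico_eq_sum_range, Nat.add_sub_cancel]
  refine sum_congr rfl fun k _ => ?_
  push_cast
  ring_nf

section FiltZ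

variable {Ω : Type*} {N : ℕ} {Z : ℝ → Ω → Fin N}

theorem filtZ_le [m₀ : MeasurableSpace Ω] (hZ : ∀ u, Measurable (Z u)) (s : ℝ) :
    filtZ Z s ≤ m₀ :=
  iSup₂_le fun u _ => (hZ u).comap_le

theorem measurable_filtZ {s : ℝ} (hs : 0 ≤ s) : Measurable[filtZ Z s] (Z s) :=
  Measurable.of_comap_le (le_iSup₂ (f := fun u (_ : u ∈ Set.Icc 0 s) =>
    MeasurableSpace.comap (Z u) ⊤) s ⟨hs, le_rfl⟩)

end FiltZ

theorem stmt7_general {Ω : Type*} [MeasurableSpace Ω] (ℙ : Measure Ω) [IsProbabilityMeasure ℙ]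
    (N : ℕ)
    (Q : Matrix (Fin N) (Fin N) ℝ)
    (Z : ℝ → Ω → Fin N)
    (hZmeas : Measurable fun p : ℝ × Ω => Z p.1 p.2)
    (hMarkov : ∀ s t : ℝ, 0 ≤ s → s ≤ t → ∀ k : Fin N,
      MeasureTheory.condExp (filtZ Z s) ℙ (fun ω => if Z t ω = k then (1 : ℝ) else 0)
        =ᵐ[ℙ] fun ω => NormedSpace.exp ((t - s) • Q) (Z s ω) k)
    (h : ℕ → ℝ) (hhpos : ∀ n, 0 < h n)
    (hh0 : Tendsto h atTop (nhds 0)) :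
    ∀ i : Fin N,
      TendstoInMeasure ℙ
        (fun (n : ℕ) (ω : Ω) =>
          (1 / (n : ℝ)) *
              ∑ j ∈ Finset.Icc 1 n,
                (if Z (((j : ℝ) - 1) * h n) ω = i then (1 : ℝ) else 0) -
            (1 / ((n : ℝ) * h n)) *
              ∫ s in (0 : ℝ)..((n : ℝ) * h n), (if Z s ω = i then (1 : ℝ) else 0))
        atTop (fun _ => (0 : ℝ)) := by
  intro i
  set f : ℝ → Ω → ℝ := fun t ω => if Z t ω = i then 1 else 0
  have hZ : ∀ t, Measurable (Z t) := fun t => hZmeas.comp measurable_prodMk_left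
  have hf : Measurable (uncurry f) :=
    measurable_const.ite (hZmeas (measurableSet_singleton i)) measurable_const
  have hfC : ∀ t ω, |f t ω| ≤ 1 := fun t ω => by unfold f; split_ifs <;> simp
  have hstep : ∀ s t, 0 ≤ s → s ≤ t → ∫ ω, |f t ω - f s ω| ∂ℙ
      ≤ ∑ k, |NormedSpace.exp ((t - s) • Q) k i - (1 : Matrix (Fin N) (Fin N) ℝ) k i| :=
    fun s t hs hst => integral_abs_ite_sub_ite_le_of_condExp (filtZ_le hZ s)
      (measurable_filtZ hs) (hZ t) (hMarkov s t hs hst i)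
  have hM : Tendsto (fun u : ℝ =>
      ∑ k, |NormedSpace.exp (u • Q) k i - (1 : Matrix (Fin N) (Fin N) ℝ) k i|) (𝓝 0) (𝓝 0) :=
    (continuous_finsetSum _ fun k _ =>
      (((Matrix.continuous_exp_smul Q).matrix_elem k i).sub continuous_const).abs).tendsto' _ _
      (by simp)
  have hriemann : ∀ (n : ℕ) ω,
      ∑ j ∈ Icc 1 n, (if Z (((j : ℝ) - 1) * h n) ω = i then (1 : ℝ) else 0)
        = ∑ k ∈ range n, f (k * h n) ω := fun n ω =>
    sum_Icc_one_cast_sub_one (fun x => f (x * h n) ω) n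
  simp only [hriemann]
  exact tendstoInMeasure_of_tendsto_integral_norm
    (fun n => integrable_riemannAvg_sub_timeAvg hf hfC (hhpos n).le n)
    (by simpa only [Real.norm_eq_abs] using
      tendsto_integral_abs_riemannAvg_sub_timeAvg hf hfC hM hstep hhpos hh0)

/-- Lemma 6.3: the discrete average of indicators matches the time average in probability. -/
theorem stmt7 {Ω : Type*} [MeasurableSpace Ω] (ℙ : Measure Ω) [IsProbabilityMeasure ℙ]
    (N : ℕ) (hN : 2 ≤ N)
    (Q : Matrix (Fin N) (Fin N) ℝ)
    (hQoff : ∀ i j : Fin N, i ≠ j → 0 < Q i j)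
    (hQdiag : ∀ i : Fin N, Q i i = -∑ j ∈ Finset.univ.erase i, Q i j)
    (π : Fin N → ℝ)
    (hπnn : ∀ i, 0 ≤ π i) (hπsum : ∑ i, π i = 1)
    (hπQ : ∀ j, ∑ i, π i * Q i j = 0)
    (hπuniq : ∀ π' : Fin N → ℝ, (∀ i, 0 ≤ π' i) → (∑ i, π' i = 1) →
      (∀ j, ∑ i, π' i * Q i j = 0) → π' = π)
    (Z : ℝ → Ω → Fin N)
    (hZmeas : Measurable fun p : ℝ × Ω => Z p.1 p.2)
    (hZ0 : ∀ i, ℙ {ω | Z 0 ω = i} = ENNReal.ofReal (π i))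
    (hMarkov : ∀ s t : ℝ, 0 ≤ s → s ≤ t → ∀ k : Fin N,
      MeasureTheory.condExp (filtZ Z s) ℙ (fun ω => if Z t ω = k then (1 : ℝ) else 0)
        =ᵐ[ℙ] fun ω => NormedSpace.exp ((t - s) • Q) (Z s ω) k)
    (h : ℕ → ℝ) (hhpos : ∀ n, 0 < h n)
    (hh0 : Tendsto h atTop (nhds 0))
    (hnh : Tendsto (fun n : ℕ => (n : ℝ) * h n) atTop atTop) :
    ∀ i : Fin N,
      TendstoInMeasure ℙ
        (fun (n : ℕ) (ω : Ω) =>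
          (1 / (n : ℝ)) *
              ∑ j ∈ Finset.Icc 1 n,
                (if Z (((j : ℝ) - 1) * h n) ω = i then (1 : ℝ) else 0) -
            (1 / ((n : ℝ) * h n)) *
              ∫ s in (0 : ℝ)..((n : ℝ) * h n), (if Z s ω = i then (1 : ℝ) else 0))
        atTop (fun _ => (0 : ℝ)) :=
  stmt7_general ℙ N Q Z hZmeas hMarkov h hhpos hh0
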